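/- arXiv:quant-ph/0307132 — 4 statements merged into one kernel-verified Lean document; each statement's English description precedes it below -/
import Mathlib

section
/- If a is an n×n Hermitian complex matrix with trace p > 0 satisfying ‖a − (p/n)·1ₙ‖² ≤ p²/(n(n−1)) in the Frobenius (Hilbert–Schmidt) norm, then a is positive semidefinite. -/
/-!
Diagonalize `a`: its eigenvalues `λᵢ` sum to `p` and `‖a − (p/n)·1‖² = ∑ (λᵢ − p/n)²`.
For a vector `x` with zero sum, `x_k = −∑_{i ≠ k} xᵢ`, so Cauchy–Schwarz gives
`n x_k² ≤ (n − 1) ∑ xᵢ²`. Applied to `xᵢ = λᵢ − p/n` this yields `n² (λ_k − p/n)² ≤ p²`,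
i.e. `|n λ_k − p| ≤ p`, so `λ_k ≥ 0`.
-/

open ComplexOrder Finset

lemma Fintype.card_mul_sq_le_of_sum_eq_zero {ι : Type*} [Fintype ι] [DecidableEq ι]
    {x : ι → ℝ} (hx : ∑ i, x i = 0) (k : ι) :
    Fintype.card ι * x k ^ 2 ≤ (Fintype.card ι - 1) * ∑ i, x i ^ 2 := by
  set s := univ.erase k
  have hcard : (#s : ℝ) = Fintype.card ι - 1 := by
    rw [card_erase_of_mem (mem_univ k), card_univ,
      Nat.cast_pred (Fintype.card_pos_iff.mpr ⟨k⟩)]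
  have hrest : ∑ i ∈ s, x i = -x k := by
    linarith [add_sum_erase univ x (mem_univ k)]
  have hcs := sq_sum_le_card_mul_sum_sq (s := s) (f := x)
  rw [hrest, neg_sq, hcard] at hcs
  rw [← add_sum_erase univ (fun i ↦ x i ^ 2) (mem_univ k)]
  linear_combination hcs

lemma nonneg_of_card_mul_sum_sq_sub_mean_le {ι : Type*} [Fintype ι] {l : ι → ℝ} {p : ℝ}
    (hp : 0 ≤ p) (hsum : ∑ i, l i = p)
    (hvar : Fintype.card ι * (Fintype.card ι - 1) * ∑ i, (l i - p / Fintype.card ι) ^ 2 ≤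
      p ^ 2)
    (k : ι) : 0 ≤ l k := by
  classical
  set N : ℝ := (Fintype.card ι : ℝ)
  have hN : 0 < N := by simpa [N] using Fintype.card_pos_iff.mpr ⟨k⟩
  have hcentered : ∑ i, (l i - p / N) = 0 := by
    rw [sum_sub_distrib, hsum, sum_const, card_univ, nsmul_eq_mul]
    field_simp
    ring
  have hk := Fintype.card_mul_sq_le_of_sum_eq_zero hcentered k
  have hdev : (N * l k - p) ^ 2 ≤ p ^ 2 := by
    calc (N * l k - p) ^ 2 = N * (N * (l k - p / N) ^ 2) := by field_simp
      _ ≤ N * ((N - 1) * ∑ i, (l i - p / N) ^ 2) := by gcongr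
      _ ≤ p ^ 2 := by linarith
  exact nonneg_of_mul_nonneg_right (by linarith [(abs_le_of_sq_le_sq' hdev hp).1]) hN

lemma Matrix.trace_conjStarAlgAut {n 𝕜 : Type*} [Fintype n] [DecidableEq n] [RCLike 𝕜]
    (u : unitary (Matrix n n 𝕜)) (x : Matrix n n 𝕜) :
    (Unitary.conjStarAlgAut 𝕜 _ u x).trace = x.trace := by
  rw [Unitary.conjStarAlgAut_apply, trace_mul_cycle, Unitary.coe_star_mul_self, one_mul]

lemma Matrix.IsHermitian.trace_sub_smul_one_mul_self {n 𝕜 : Type*} [Fintype n] [DecidableEq n]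
    [RCLike 𝕜] {A : Matrix n n 𝕜} (hA : A.IsHermitian) (c : 𝕜) :
    ((A - c • 1) * (A - c • 1)).trace = ∑ i, ((hA.eigenvalues i : 𝕜) - c) ^ 2 := by
  conv_lhs => rw [hA.spectral_theorem]
  rw [← map_one (Unitary.conjStarAlgAut 𝕜 _ hA.eigenvectorUnitary), ← map_smul, ← map_sub,
    ← map_mul, trace_conjStarAlgAut, smul_one_eq_diagonal, diagonal_sub]
  simp [sq]

theorem stmt_0_general (n : ℕ) (a : Matrix (Fin n) (Fin n) ℂ)
    (ha : a.IsHermitian) (p : ℝ) (hp : 0 < p) (htr : Matrix.trace a = (p : ℂ))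
    (hball : Complex.re
        (Matrix.trace ((a - ((p : ℂ) / n) • (1 : Matrix (Fin n) (Fin n) ℂ)) *
          (a - ((p : ℂ) / n) • (1 : Matrix (Fin n) (Fin n) ℂ))))
      ≤ p ^ 2 / ((n : ℝ) * ((n : ℝ) - 1))) :
    a.PosSemidef := by
  have hsum : ∑ i, ha.eigenvalues i = p := by
    have htr' := ha.trace_eq_sum_eigenvalues.symm.trans htr
    simp only [Complex.coe_algebraMap] at htr'
    exact_mod_cast htr'
  rw [ha.trace_sub_smul_one_mul_self] at hball
  have hvar : ∑ i, (ha.eigenvalues i - p / n) ^ 2 ≤ p ^ 2 / ((n : ℝ) * ((n : ℝ) - 1)) := by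
    simpa only [Complex.coe_algebraMap, ← Complex.ofReal_natCast, ← Complex.ofReal_div,
      ← Complex.ofReal_sub, ← Complex.ofReal_pow, ← Complex.ofReal_sum, Complex.ofReal_re]
      using hball
  refine ha.posSemidef_iff_eigenvalues_nonneg.mpr fun i ↦
    nonneg_of_card_mul_sum_sq_sub_mean_le hp.le hsum ?_ i
  -- for `n = 1` the bound in `hball` is the junk value `p ^ 2 / 0 = 0`, still usable here
  have hn1 : (1 : ℝ) ≤ n := by exact_mod_cast i.pos
  rw [Fintype.card_fin, mul_comm]
  exact mul_le_of_le_div₀ (sq_nonneg p) (by nlinarith) hvar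

/-- If a Hermitian `n × n` matrix `a` with trace `p > 0` satisfies
`‖a − (p/n)·1‖² ≤ p²/(n(n−1))` in the Frobenius norm, then `a` is positive semidefinite. -/
theorem stmt_0 (n : ℕ) (hn : 2 ≤ n) (a : Matrix (Fin n) (Fin n) ℂ)
    (ha : a.IsHermitian) (p : ℝ) (hp : 0 < p) (htr : Matrix.trace a = (p : ℂ))
    (hball : Complex.re
        (Matrix.trace ((a - ((p : ℂ) / n) • (1 : Matrix (Fin n) (Fin n) ℂ)) *
          (a - ((p : ℂ) / n) • (1 : Matrix (Fin n) (Fin n) ℂ))))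
      ≤ p ^ 2 / ((n : ℝ) * ((n : ℝ) - 1))) :
    a.PosSemidef :=
  stmt_0_general n a ha p hp htr hball
end

section
/- Let n ≥ 2 and let (f_α), α = 1,…,n²−1, be Hermitian n×n matrices with Tr f_α = 0 and Tr(f_α f_β) = δ_{αβ}. Let T be a real (n²−1)×(n²−1) matrix and y ∈ ℝ^{n²−1} such that the affine map x ↦ Tx + y maps the closed unit ball of ℝ^{n²−1} into itself. Define φ[T,y](a) = (Tr a/n)·1ₙ + (1/(n−1))·∑_α (Tx + √((n−1)/n)·(Tr a)·y)_α f_α, where x_α = Tr(a f_α). Then φ[T,y] is a linear, trace-preserving, positive map on M_n(ℂ): if a is positive semidefinite then so is φ[T,y](a). -/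
/-!
Let `a ≥ 0` have trace `p` and Bloch vector `x_α = Tr(a f_α)`. Bessel's inequality for the
orthonormal family `1/√n, f_α`, together with `Tr a² ≤ p²`, gives `|x|² ≤ ((n-1)/n) p²`, so `x`
lies in the ball of radius `r = √((n-1)/n) p`; rescaling the hypothesis on `(T, y)`, so does
`z = T x + r y`. Then `b = φ[T,y](a) = (p/n)·1 + ∑ (z_α/(n-1)) f_α` is Hermitian of trace `p` and
within Frobenius distance `p/√(n(n-1))` of `(p/n)·1`, i.e. `(n-1) Tr b² ≤ p²`. For real eigenvalues
summing to `p ≥ 0` this forces each one to be nonnegative: Cauchy–Schwarz on the other `n-1`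
eigenvalues rules out a negative one.
-/

open ComplexOrder Matrix

/-- The map `φ[T,y]` of the main theorem, extended complex-linearly to `M_n(ℂ)`:
`φ[T,y](a) = (Tr a/n)·1 + (1/(n−1))·∑_α (T x + √((n−1)/n)·(Tr a)·y)_α f_α`
with `x_β = Tr(a f_β)`. -/
noncomputable def phiTy (n : ℕ) (f : Fin (n ^ 2 - 1) → Matrix (Fin n) (Fin n) ℂ)
    (T : Matrix (Fin (n ^ 2 - 1)) (Fin (n ^ 2 - 1)) ℝ) (y : Fin (n ^ 2 - 1) → ℝ)
    (a : Matrix (Fin n) (Fin n) ℂ) : Matrix (Fin n) (Fin n) ℂ :=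
  (Matrix.trace a / n) • (1 : Matrix (Fin n) (Fin n) ℂ) +
    (1 / ((n : ℂ) - 1)) • ∑ α, ((∑ β, (T α β : ℂ) * Matrix.trace (a * f β)) +
      (Real.sqrt (((n : ℝ) - 1) / n) : ℂ) * Matrix.trace a * (y α : ℂ)) • f α

lemma nonneg_of_card_sub_one_mul_sum_sq_le {ι : Type*} [Fintype ι] (l : ι → ℝ)
    (hsum : 0 ≤ ∑ i, l i) (hsq : (Fintype.card ι - 1) * ∑ i, l i ^ 2 ≤ (∑ i, l i) ^ 2) (k : ι) :
    0 ≤ l k := by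
  classical
  have hpos : 0 < Fintype.card ι := Fintype.card_pos_iff.2 ⟨k⟩
  have hcard : ((Finset.univ.erase k).card : ℝ) = Fintype.card ι - 1 := by
    rw [Finset.card_erase_of_mem (Finset.mem_univ k), Finset.card_univ,
      Nat.cast_sub hpos, Nat.cast_one]
  have hrest := sq_sum_le_card_mul_sum_sq (s := Finset.univ.erase k) (f := l)
  rw [hcard, Finset.sum_erase_eq_sub (Finset.mem_univ k),
    Finset.sum_erase_eq_sub (Finset.mem_univ k)] at hrest
  have hN : (1 : ℝ) ≤ Fintype.card ι := by exact_mod_cast hpos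
  by_contra! hk
  nlinarith [mul_pos (neg_pos.2 hk) (neg_pos.2 hk)]

namespace Matrix

variable {m 𝕜 : Type*} [Fintype m] [RCLike 𝕜] {A : Matrix m m 𝕜}

lemma IsHermitian.ofReal_re_trace_mul {B : Matrix m m 𝕜} (hA : A.IsHermitian)
    (hB : B.IsHermitian) :
    (RCLike.re (A * B).trace : 𝕜) = (A * B).trace := by
  rw [← RCLike.conj_eq_iff_re, ← RCLike.star_def, ← trace_conjTranspose, conjTranspose_mul,
    hA.eq, hB.eq, trace_mul_comm]

variable [DecidableEq m]

lemma IsHermitian.trace_mul_self (hA : A.IsHermitian) :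
    (A * A).trace = ∑ i, (hA.eigenvalues i : 𝕜) ^ 2 := by
  conv_lhs => rw [hA.spectral_theorem, ← map_mul, Unitary.conjStarAlgAut_apply, trace_mul_cycle,
    Unitary.coe_star_mul_self, one_mul, diagonal_mul_diagonal, trace_diagonal]
  simp [sq]

lemma PosSemidef.re_trace_mul_self_le (hA : A.PosSemidef) :
    RCLike.re (A * A).trace ≤ RCLike.re A.trace ^ 2 := by
  rw [hA.1.trace_mul_self, hA.1.trace_eq_sum_eigenvalues]
  simp only [map_sum, ← RCLike.ofReal_pow, RCLike.ofReal_re]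
  exact Finset.sum_sq_le_sq_sum_of_nonneg fun i _ ↦ hA.eigenvalues_nonneg i

lemma IsHermitian.posSemidef_of_card_sub_one_mul_re_trace_mul_self_le (hA : A.IsHermitian)
    (htr : 0 ≤ RCLike.re A.trace)
    (hsq : (Fintype.card m - 1) * RCLike.re (A * A).trace ≤ RCLike.re A.trace ^ 2) :
    A.PosSemidef := by
  rw [hA.trace_mul_self, hA.trace_eq_sum_eigenvalues] at *
  simp only [map_sum, ← RCLike.ofReal_pow, RCLike.ofReal_re] at htr hsq
  exact hA.posSemidef_iff_eigenvalues_nonneg.2 (nonneg_of_card_sub_one_mul_sum_sq_le _ htr hsq)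

end Matrix

lemma dotProduct_mulVec_add_smul_le {ι κ : Type*} [Fintype ι] [Fintype κ] (T : Matrix κ ι ℝ)
    (y : κ → ℝ) (hball : ∀ x, x ⬝ᵥ x ≤ 1 → (T *ᵥ x + y) ⬝ᵥ (T *ᵥ x + y) ≤ 1)
    {r : ℝ} (hr : 0 ≤ r) {x : ι → ℝ} (hx : x ⬝ᵥ x ≤ r ^ 2) :
    (T *ᵥ x + r • y) ⬝ᵥ (T *ᵥ x + r • y) ≤ r ^ 2 := by
  rcases hr.eq_or_lt with rfl | hr
  · have hx0 : x = 0 := dotProduct_self_eq_zero.1 (le_antisymm (by simpa using hx)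
      (dotProduct_self_star_nonneg x))
    simp [hx0]
  · have hscaled : (r⁻¹ • x) ⬝ᵥ (r⁻¹ • x) ≤ 1 := by
      rw [smul_dotProduct, dotProduct_smul, smul_eq_mul, smul_eq_mul, ← mul_assoc,
        ← sq, inv_pow, inv_mul_le_one₀ (by positivity)]
      exact hx
    have hxr : T *ᵥ x + r • y = r • (T *ᵥ (r⁻¹ • x) + y) := by
      rw [mulVec_smul, smul_add, smul_inv_smul₀ hr.ne']
    rw [hxr, smul_dotProduct, dotProduct_smul, smul_eq_mul, smul_eq_mul, ← mul_assoc, ← sq]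
    exact mul_le_of_le_one_right (sq_nonneg r) (hball _ hscaled)

section Bloch

variable {m ι : Type*} [Fintype m] [DecidableEq m] [Fintype ι]
  (f : ι → Matrix m m ℂ)

noncomputable def blochMatrix (p : ℝ) (u : ι → ℝ) : Matrix m m ℂ :=
  ((p / Fintype.card m : ℝ) : ℂ) • 1 + ∑ α, (u α : ℂ) • f α

noncomputable def blochVector (a : Matrix m m ℂ) : ι → ℝ := fun α ↦ (a * f α).trace.re

variable {f}

lemma blochMatrix_isHermitian (hherm : ∀ α, (f α).IsHermitian) (p : ℝ) (u : ι → ℝ) :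
    (blochMatrix f p u).IsHermitian :=
  (isHermitian_one.smul (Complex.conj_ofReal _)).add <|
    isSelfAdjoint_sum _ fun α _ ↦ (hherm α).smul (Complex.conj_ofReal _)

lemma trace_blochMatrix [Nonempty m] (htraceless : ∀ α, (f α).trace = 0) (p : ℝ) (u : ι → ℝ) :
    (blochMatrix f p u).trace = p := by
  simp [blochMatrix, trace_sum, htraceless, Fintype.card_ne_zero]

lemma re_trace_mul_blochMatrix (a : Matrix m m ℂ) (p : ℝ) (u : ι → ℝ) :
    (a * blochMatrix f p u).trace.re = p / Fintype.card m * a.trace.re + u ⬝ᵥ blochVector f a := by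
  simp [blochMatrix, blochVector, mul_add, Finset.mul_sum, trace_sum, dotProduct]

variable [DecidableEq ι]

lemma blochVector_blochMatrix (htraceless : ∀ α, (f α).trace = 0)
    (horth : ∀ α β, (f α * f β).trace = if α = β then 1 else 0) (p : ℝ) (u : ι → ℝ) :
    blochVector f (blochMatrix f p u) = u := by
  ext β
  simp [blochVector, blochMatrix, add_mul, Finset.sum_mul, trace_sum, htraceless, horth]

lemma re_trace_blochMatrix_mul_self [Nonempty m] (htraceless : ∀ α, (f α).trace = 0)
    (horth : ∀ α β, (f α * f β).trace = if α = β then 1 else 0) (p : ℝ) (u : ι → ℝ) :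
    (blochMatrix f p u * blochMatrix f p u).trace.re = p ^ 2 / Fintype.card m + u ⬝ᵥ u := by
  rw [re_trace_mul_blochMatrix, blochVector_blochMatrix htraceless horth,
    trace_blochMatrix htraceless, Complex.ofReal_re]
  ring

lemma dotProduct_blochVector_le [Nonempty m] (hherm : ∀ α, (f α).IsHermitian)
    (htraceless : ∀ α, (f α).trace = 0)
    (horth : ∀ α β, (f α * f β).trace = if α = β then 1 else 0)
    {a : Matrix m m ℂ} (ha : a.PosSemidef) :
    blochVector f a ⬝ᵥ blochVector f a ≤
      (Fintype.card m - 1) / Fintype.card m * a.trace.re ^ 2 := by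
  set b := blochMatrix f a.trace.re (blochVector f a)
  -- `b` is the Frobenius-orthogonal projection of `a` onto the span of `1` and the `f α`,
  -- so this is Bessel's inequality.
  have hgap : 0 ≤ ((a - b) * (a - b)).trace.re := by
    have hab : (a - b).IsHermitian := ha.1.sub (blochMatrix_isHermitian hherm _ _)
    have := (posSemidef_conjTranspose_mul_self (a - b)).trace_nonneg
    simpa [hab.eq] using (Complex.nonneg_iff.1 this).1
  have hexpand : ((a - b) * (a - b)).trace.re =
      (a * a).trace.re - 2 * (a * b).trace.re + (b * b).trace.re := by
    rw [sub_mul, mul_sub, mul_sub, trace_sub, trace_sub, trace_sub, trace_mul_comm b a]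
    simp only [Complex.sub_re]
    ring
  rw [hexpand, re_trace_mul_blochMatrix, re_trace_blochMatrix_mul_self htraceless horth] at hgap
  have hN : (0 : ℝ) < Fintype.card m := by exact_mod_cast Fintype.card_pos
  have hsub : (Fintype.card m - 1) / Fintype.card m * a.trace.re ^ 2 =
      a.trace.re ^ 2 - a.trace.re ^ 2 / Fintype.card m := by
    field_simp
  have haa := ha.re_trace_mul_self_le
  simp only [RCLike.re_to_complex] at haa
  have hsq : a.trace.re / Fintype.card m * a.trace.re = a.trace.re ^ 2 / Fintype.card m := by ring
  linarith

lemma blochMatrix_posSemidef (hherm : ∀ α, (f α).IsHermitian)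
    (htraceless : ∀ α, (f α).trace = 0)
    (horth : ∀ α β, (f α * f β).trace = if α = β then 1 else 0)
    (hm : 1 < Fintype.card m) {p : ℝ} (hp : 0 ≤ p) {u : ι → ℝ}
    (hu : u ⬝ᵥ u ≤ p ^ 2 / (Fintype.card m * (Fintype.card m - 1))) :
    (blochMatrix f p u).PosSemidef := by
  have : Nonempty m := Fintype.card_pos_iff.1 (by omega)
  have hN : (1 : ℝ) < Fintype.card m := by exact_mod_cast hm
  refine (blochMatrix_isHermitian hherm p u).posSemidef_of_card_sub_one_mul_re_trace_mul_self_le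
    ?_ ?_ <;> simp only [RCLike.re_to_complex]
  · rwa [trace_blochMatrix htraceless, Complex.ofReal_re]
  · rw [re_trace_blochMatrix_mul_self htraceless horth, trace_blochMatrix htraceless,
      Complex.ofReal_re]
    rw [le_div_iff₀ (by nlinarith)] at hu
    field_simp
    nlinarith

end Bloch

section phiTy

variable {n : ℕ} {f : Fin (n ^ 2 - 1) → Matrix (Fin n) (Fin n) ℂ}
  (T : Matrix (Fin (n ^ 2 - 1)) (Fin (n ^ 2 - 1)) ℝ) (y : Fin (n ^ 2 - 1) → ℝ)

lemma phiTy_eq_blochMatrix (hherm : ∀ α, (f α).IsHermitian) {a : Matrix (Fin n) (Fin n) ℂ}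
    (ha : a.IsHermitian) :
    phiTy n f T y a = blochMatrix f a.trace.re
      (((n : ℝ) - 1)⁻¹ • (T *ᵥ blochVector f a + (√(((n : ℝ) - 1) / n) * a.trace.re) • y)) := by
  have htr : (a.trace.re : ℂ) = a.trace := by
    simpa [RCLike.re_to_complex] using ha.ofReal_re_trace_mul isHermitian_one
  have hx (β) : (blochVector f a β : ℂ) = (a * f β).trace := by
    simpa [blochVector, RCLike.re_to_complex] using ha.ofReal_re_trace_mul (hherm β)
  conv_lhs => rw [phiTy, ← htr]; simp only [← hx]
  simp only [blochMatrix, Fintype.card_fin, Finset.smul_sum, smul_smul]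
  congr 1
  · push_cast; ring_nf
  · refine Finset.sum_congr rfl fun α _ ↦ ?_
    simp [mulVec, dotProduct]

lemma isLinearMap_phiTy : IsLinearMap ℂ (phiTy n f T y) where
  map_add a b := by
    simp only [phiTy, trace_add, add_mul, mul_add, add_div, Finset.sum_add_distrib, add_smul,
      smul_add]
    module
  map_smul c a := by
    have hcoeff (α) : (∑ β, (T α β : ℂ) * (c * (a * f β).trace)) +
        (√(((n : ℝ) - 1) / n) : ℂ) * (c * a.trace) * (y α : ℂ) =
        c * ((∑ β, (T α β : ℂ) * (a * f β).trace) +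
          (√(((n : ℝ) - 1) / n) : ℂ) * a.trace * (y α : ℂ)) := by
      rw [mul_add, Finset.mul_sum]
      simp only [mul_left_comm c]
      ring
    simp only [phiTy, trace_smul, smul_mul, smul_eq_mul, hcoeff, mul_smul, ← Finset.smul_sum]
    module

lemma trace_phiTy (htraceless : ∀ α, (f α).trace = 0) (hn : n ≠ 0)
    (a : Matrix (Fin n) (Fin n) ℂ) :
    (phiTy n f T y a).trace = a.trace := by
  have : (n : ℂ) ≠ 0 := Nat.cast_ne_zero.2 hn
  simp [phiTy, trace_sum, htraceless, field]

end phiTy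

/-- Main theorem: every affine map `(T, y)` of `ℝ^{n²−1}` carrying the closed unit ball into
itself induces a positive, trace-preserving linear map `φ[T,y] : M_n(ℂ) → M_n(ℂ)`. -/
theorem stmt_6 (n : ℕ) (hn : 2 ≤ n) (f : Fin (n ^ 2 - 1) → Matrix (Fin n) (Fin n) ℂ)
    (hherm : ∀ α, (f α).IsHermitian) (htraceless : ∀ α, Matrix.trace (f α) = 0)
    (horth : ∀ α β, Matrix.trace (f α * f β) = if α = β then 1 else 0)
    (T : Matrix (Fin (n ^ 2 - 1)) (Fin (n ^ 2 - 1)) ℝ) (y : Fin (n ^ 2 - 1) → ℝ)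
    (hball : ∀ x : Fin (n ^ 2 - 1) → ℝ, x ⬝ᵥ x ≤ 1 →
      (T.mulVec x + y) ⬝ᵥ (T.mulVec x + y) ≤ 1) :
    IsLinearMap ℂ (phiTy n f T y) ∧
    (∀ a : Matrix (Fin n) (Fin n) ℂ, Matrix.trace (phiTy n f T y a) = Matrix.trace a) ∧
    (∀ a : Matrix (Fin n) (Fin n) ℂ, a.PosSemidef → (phiTy n f T y a).PosSemidef) := by
  refine ⟨isLinearMap_phiTy T y, trace_phiTy T y htraceless (by omega), fun a ha ↦ ?_⟩
  have : NeZero n := ⟨by omega⟩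
  have hn' : (2 : ℝ) ≤ n := by exact_mod_cast hn
  have hp : 0 ≤ a.trace.re := (Complex.nonneg_iff.1 ha.trace_nonneg).1
  have hx := dotProduct_blochVector_le hherm htraceless horth ha
  rw [Fintype.card_fin] at hx
  rw [phiTy_eq_blochMatrix T y hherm ha.1]
  set p := a.trace.re
  set r := √(((n : ℝ) - 1) / n) * p
  have hr2 : r ^ 2 = ((n : ℝ) - 1) / n * p ^ 2 := by
    rw [mul_pow, Real.sq_sqrt (div_nonneg (by linarith) (by positivity))]
  have hz := dotProduct_mulVec_add_smul_le T y hball (by positivity) (hr2 ▸ hx)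
  refine blochMatrix_posSemidef hherm htraceless horth (by simpa) hp ?_
  rw [smul_dotProduct, dotProduct_smul, smul_eq_mul, smul_eq_mul, ← mul_assoc, Fintype.card_fin]
  calc ((n : ℝ) - 1)⁻¹ * ((n : ℝ) - 1)⁻¹ * _
      ≤ ((n : ℝ) - 1)⁻¹ * ((n : ℝ) - 1)⁻¹ * (((n : ℝ) - 1) / n * p ^ 2) := by
        gcongr
        · exact mul_self_nonneg _
        · exact hr2 ▸ hz
    _ = p ^ 2 / (n * (n - 1)) := by
        have : (n : ℝ) - 1 ≠ 0 := by linarith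
        field_simp
end

section
/- The Choi-type map φ on M₃(ℂ) given by a'_{11} = ½(a_{11}+a_{33}), a'_{22} = ½(a_{22}+a_{11}), a'_{33} = ½(a_{33}+a_{22}), a'_{ij} = −½ a_{ij} for i ≠ j, is positive and trace-preserving. -/
/-!
Positivity reduces to `φ(BᴴB)` and then, row by row of `B`, to the rank-one case: for `v, x ∈ ℂ³`,
`|∑ vᵢ xᵢ|² ≤ ∑ (2|vᵢ|² + |vᵢ₋₁|²) |xᵢ|²`. After the triangle inequality this is a real inequality
in `pᵢ = |vᵢ xᵢ|` and `qᵢ = |vᵢ₋₁ xᵢ|`, which satisfy `p₀p₁p₂ = q₀q₁q₂`. Writing `pᵢ = aᵢ³`, AM-GM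
gives `∑ qᵢ² ≥ 3 (a₀a₁a₂)²`, and Schur's inequality for `aᵢ²` then yields `2 ∑ pᵢpⱼ ≤ ∑ pᵢ² + ∑ qᵢ²`.
-/

open ComplexOrder

/-- The Choi-type map on `M₃(ℂ)`: `a'_{11} = ½(a_{11}+a_{33})`, `a'_{22} = ½(a_{22}+a_{11})`,
`a'_{33} = ½(a_{33}+a_{22})`, `a'_{ij} = −½ a_{ij}` for `i ≠ j`. -/
noncomputable def choiMap (a : Matrix (Fin 3) (Fin 3) ℂ) : Matrix (Fin 3) (Fin 3) ℂ :=
  Matrix.of fun i j =>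
    if i = j then (1 / 2 : ℂ) * (a i i + a (i - 1) (i - 1))
    else -(1 / 2 : ℂ) * a i j

theorem schur_inequality {x y z : ℝ} (hx : 0 ≤ x) (hy : 0 ≤ y) (hz : 0 ≤ z) :
    0 ≤ x * (x - y) * (x - z) + y * (y - x) * (y - z) + z * (z - x) * (z - y) := by
  rcases le_total x y with hxy | hxy <;> rcases le_total y z with hyz | hyz <;>
    rcases le_total x z with hxz | hxz <;>
    nlinarith [mul_nonneg hx (sq_nonneg (x - y)), mul_nonneg hy (sq_nonneg (x - y)),
      mul_nonneg hz (sq_nonneg (x - y)), mul_nonneg hx (sq_nonneg (y - z)),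
      mul_nonneg hy (sq_nonneg (y - z)), mul_nonneg hz (sq_nonneg (y - z)),
      mul_nonneg hx (sq_nonneg (x - z)), mul_nonneg hy (sq_nonneg (x - z)),
      mul_nonneg hz (sq_nonneg (x - z))]

theorem three_mul_le_add_pow_three {x y z : ℝ} (hx : 0 ≤ x) (hy : 0 ≤ y) (hz : 0 ≤ z) :
    3 * (x * y * z) ≤ x ^ 3 + y ^ 3 + z ^ 3 := by
  nlinarith [mul_nonneg (add_nonneg (add_nonneg hx hy) hz)
    (add_nonneg (add_nonneg (sq_nonneg (x - y)) (sq_nonneg (y - z))) (sq_nonneg (z - x)))]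

theorem two_mul_sum_pow_three_mul_le {a b c α β γ : ℝ} (h : a * b * c = α * β * γ) :
    2 * (a ^ 3 * b ^ 3 + b ^ 3 * c ^ 3 + c ^ 3 * a ^ 3) ≤
      a ^ 6 + b ^ 6 + c ^ 6 + (α ^ 6 + β ^ 6 + γ ^ 6) := by
  have hamgm : 3 * (a ^ 2 * b ^ 2 * c ^ 2) ≤ α ^ 6 + β ^ 6 + γ ^ 6 := by
    calc 3 * (a ^ 2 * b ^ 2 * c ^ 2) = 3 * (α ^ 2 * β ^ 2 * γ ^ 2) := by
          linear_combination 3 * (a * b * c + α * β * γ) * h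
      _ ≤ (α ^ 2) ^ 3 + (β ^ 2) ^ 3 + (γ ^ 2) ^ 3 :=
          three_mul_le_add_pow_three (sq_nonneg α) (sq_nonneg β) (sq_nonneg γ)
      _ = α ^ 6 + β ^ 6 + γ ^ 6 := by ring
  nlinarith [schur_inequality (sq_nonneg a) (sq_nonneg b) (sq_nonneg c),
    mul_nonneg (sq_nonneg (a * b)) (sq_nonneg (a - b)),
    mul_nonneg (sq_nonneg (b * c)) (sq_nonneg (b - c)),
    mul_nonneg (sq_nonneg (c * a)) (sq_nonneg (c - a))]

theorem exists_pow_three_eq {p : ℝ} (hp : 0 ≤ p) : ∃ a, a ^ 3 = p :=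
  ⟨p ^ ((3 : ℕ)⁻¹ : ℝ), Real.rpow_inv_natCast_pow hp (by norm_num)⟩

theorem two_mul_sum_mul_le_of_mul_eq {p₀ p₁ p₂ q₀ q₁ q₂ : ℝ} (hp₀ : 0 ≤ p₀) (hp₁ : 0 ≤ p₁)
    (hp₂ : 0 ≤ p₂) (hq₀ : 0 ≤ q₀) (hq₁ : 0 ≤ q₁) (hq₂ : 0 ≤ q₂)
    (h : p₀ * p₁ * p₂ = q₀ * q₁ * q₂) :
    2 * (p₀ * p₁ + p₁ * p₂ + p₂ * p₀) ≤ p₀ ^ 2 + p₁ ^ 2 + p₂ ^ 2 + (q₀ ^ 2 + q₁ ^ 2 + q₂ ^ 2) := by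
  obtain ⟨a, rfl⟩ := exists_pow_three_eq hp₀
  obtain ⟨b, rfl⟩ := exists_pow_three_eq hp₁
  obtain ⟨c, rfl⟩ := exists_pow_three_eq hp₂
  obtain ⟨α, rfl⟩ := exists_pow_three_eq hq₀
  obtain ⟨β, rfl⟩ := exists_pow_three_eq hq₁
  obtain ⟨γ, rfl⟩ := exists_pow_three_eq hq₂
  have habc : a * b * c = α * β * γ := by
    rw [← (Odd.pow_inj (by decide : Odd 3)), mul_pow, mul_pow, h, mul_pow, mul_pow]
  linear_combination two_mul_sum_pow_three_mul_le habc

theorem sq_sum_mul_le {u₀ u₁ u₂ s₀ s₁ s₂ : ℝ} (hu₀ : 0 ≤ u₀) (hu₁ : 0 ≤ u₁) (hu₂ : 0 ≤ u₂)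
    (hs₀ : 0 ≤ s₀) (hs₁ : 0 ≤ s₁) (hs₂ : 0 ≤ s₂) :
    (u₀ * s₀ + u₁ * s₁ + u₂ * s₂) ^ 2 ≤
      (2 * u₀ ^ 2 + u₂ ^ 2) * s₀ ^ 2 + (2 * u₁ ^ 2 + u₀ ^ 2) * s₁ ^ 2 +
        (2 * u₂ ^ 2 + u₁ ^ 2) * s₂ ^ 2 := by
  linear_combination two_mul_sum_mul_le_of_mul_eq (mul_nonneg hu₀ hs₀) (mul_nonneg hu₁ hs₁)
    (mul_nonneg hu₂ hs₂) (mul_nonneg hu₂ hs₀) (mul_nonneg hu₀ hs₁) (mul_nonneg hu₁ hs₂)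
    (by ring)

theorem norm_sum_mul_sq_le (v x : Fin 3 → ℂ) :
    ‖∑ i, v i * x i‖ ^ 2 ≤ ∑ i, (2 * ‖v i‖ ^ 2 + ‖v (i - 1)‖ ^ 2) * ‖x i‖ ^ 2 := by
  have htri : ‖∑ i, v i * x i‖ ≤ ∑ i, ‖v i‖ * ‖x i‖ := by
    simpa only [norm_mul] using norm_sum_le Finset.univ fun i => v i * x i
  calc ‖∑ i, v i * x i‖ ^ 2 ≤ (∑ i, ‖v i‖ * ‖x i‖) ^ 2 := by gcongr
    _ ≤ _ := by
      simp only [Fin.sum_univ_three]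
      exact sq_sum_mul_le (norm_nonneg _) (norm_nonneg _) (norm_nonneg _) (norm_nonneg _)
        (norm_nonneg _) (norm_nonneg _)

namespace Matrix

theorem trace_choiMap (a : Matrix (Fin 3) (Fin 3) ℂ) : (choiMap a).trace = a.trace := by
  simp only [trace, diag, choiMap, of_apply, if_true, Fin.sum_univ_three,
    show (0 : Fin 3) - 1 = 2 from rfl, show (1 : Fin 3) - 1 = 0 from rfl,
    show (2 : Fin 3) - 1 = 1 from rfl]
  ring

theorem conjTranspose_choiMap (a : Matrix (Fin 3) (Fin 3) ℂ) : (choiMap a)ᴴ = choiMap aᴴ := by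
  ext i j
  rcases eq_or_ne i j with rfl | h
  · simp [choiMap]
  · simp [choiMap, h, Ne.symm h]

theorem IsHermitian.choiMap {a : Matrix (Fin 3) (Fin 3) ℂ} (ha : a.IsHermitian) :
    (choiMap a).IsHermitian := by
  rw [IsHermitian, conjTranspose_choiMap, ha]

theorem dotProduct_choiMap_mulVec (a : Matrix (Fin 3) (Fin 3) ℂ) (x : Fin 3 → ℂ) :
    star x ⬝ᵥ choiMap a *ᵥ x =
      (∑ i, (2 * a i i + a (i - 1) (i - 1)) * (star (x i) * x i) - star x ⬝ᵥ a *ᵥ x) / 2 := by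
  simp only [dotProduct, mulVec, choiMap, of_apply, Fin.sum_univ_three, Pi.star_apply,
    Fin.isValue, Fin.reduceEq, ↓reduceIte, show (0 : Fin 3) - 1 = 2 from rfl,
    show (1 : Fin 3) - 1 = 0 from rfl, show (2 : Fin 3) - 1 = 1 from rfl]
  ring

section

variable {m n : Type*} [Fintype m]

theorem conjTranspose_mul_self_apply_self (B : Matrix m n ℂ) (i : n) :
    (Bᴴ * B) i i = ((∑ k, ‖B k i‖ ^ 2 : ℝ) : ℂ) := by
  simp [mul_apply, Complex.conj_mul']

theorem dotProduct_conjTranspose_mul_self_mulVec [Fintype n] (B : Matrix m n ℂ) (x : n → ℂ) :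
    star x ⬝ᵥ (Bᴴ * B) *ᵥ x = ((∑ k, ‖∑ i, B k i * x i‖ ^ 2 : ℝ) : ℂ) := by
  rw [← mulVec_mulVec, dotProduct_mulVec, ← star_mulVec]
  simp only [dotProduct, Pi.star_apply, RCLike.star_def, Complex.conj_mul', mulVec]
  push_cast
  rfl

end

theorem dotProduct_choiMap_conjTranspose_mul_self_mulVec_nonneg
    (B : Matrix (Fin 3) (Fin 3) ℂ) (x : Fin 3 → ℂ) :
    0 ≤ star x ⬝ᵥ choiMap (Bᴴ * B) *ᵥ x := by
  have hrow k := sub_nonneg.mpr (norm_sum_mul_sq_le (B k) x)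
  rw [dotProduct_choiMap_mulVec, dotProduct_conjTranspose_mul_self_mulVec]
  simp only [conjTranspose_mul_self_apply_self, RCLike.star_def, Complex.conj_mul']
  norm_cast
  refine div_nonneg ?_ zero_le_two
  convert Finset.sum_nonneg (s := Finset.univ) fun k _ => hrow k using 1
  simp only [Finset.sum_sub_distrib, Finset.mul_sum, Finset.sum_mul, ← Finset.sum_add_distrib,
    add_mul]
  rw [Finset.sum_comm]

theorem PosSemidef.choiMap {a : Matrix (Fin 3) (Fin 3) ℂ} (ha : a.PosSemidef) :
    (choiMap a).PosSemidef := by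
  obtain ⟨B, rfl⟩ : ∃ B, a = star B * B := by
    open scoped MatrixOrder in exact CStarAlgebra.nonneg_iff_eq_star_mul_self.mp ha.nonneg
  exact .of_dotProduct_mulVec_nonneg (IsHermitian.choiMap ha.isHermitian)
    (dotProduct_choiMap_conjTranspose_mul_self_mulVec_nonneg B)

end Matrix

/-- The Choi-type map `φ[α = π/3]` is positive and trace-preserving. -/
theorem stmt_11 :
    (∀ a : Matrix (Fin 3) (Fin 3) ℂ, Matrix.trace (choiMap a) = Matrix.trace a) ∧
    (∀ a : Matrix (Fin 3) (Fin 3) ℂ, a.PosSemidef → (choiMap a).PosSemidef) :=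
  ⟨Matrix.trace_choiMap, fun _ ha => ha.choiMap⟩
end

section
/- Let 0 ≤ κ ≤ 1 and 0 < δ ≤ 1. The affine map x ↦ Λx + c on ℝⁿ, with Λ = diag(λ,…,λ,κλ) where λ = √(1 − δ²(1−κ²)), and c = (0,…,0,δ(1−κ²)), maps the closed unit ball of ℝⁿ into itself. -/
/-- For `0 ≤ κ ≤ 1`, `0 < δ ≤ 1`, the affine map `x ↦ Λx + c` with
`Λ = diag(λ, …, λ, κλ)`, `λ = √(1 − δ²(1−κ²))`, `c = (0, …, 0, δ(1−κ²))`, maps the closed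
unit ball of `ℝⁿ` into itself. -/
theorem stmt_18 (n : ℕ) (hn : 1 ≤ n) (κ δ : ℝ) (hκ0 : 0 ≤ κ) (hκ1 : κ ≤ 1)
    (hδ0 : 0 < δ) (hδ1 : δ ≤ 1) (x : Fin n → ℝ) (hx : ∑ i, x i ^ 2 ≤ 1) :
    ∑ i : Fin n, ((if (i : ℕ) = n - 1 then
        κ * Real.sqrt (1 - δ ^ 2 * (1 - κ ^ 2)) * x i + δ * (1 - κ ^ 2)
      else Real.sqrt (1 - δ ^ 2 * (1 - κ ^ 2)) * x i) : ℝ) ^ 2 ≤ 1 := by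
  set L := Real.sqrt (1 - δ ^ 2 * (1 - κ ^ 2)) with hL
  have hnn : (0:ℝ) ≤ 1 - δ ^ 2 * (1 - κ ^ 2) := by nlinarith
  have hL2 : L ^ 2 = 1 - δ ^ 2 * (1 - κ ^ 2) := Real.sq_sqrt hnn
  have hL0 : 0 ≤ L := Real.sqrt_nonneg _
  have hlt : n - 1 < n := by omega
  set i0 : Fin n := ⟨n - 1, hlt⟩ with hi0
  have hx0 : (x i0) ^ 2 ≤ ∑ i, x i ^ 2 :=
    Finset.single_le_sum (f := fun i => x i ^ 2) (fun i _ => sq_nonneg _) (Finset.mem_univ i0)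
  have key : ∀ i : Fin n, ((if (i : ℕ) = n - 1 then
        κ * L * x i + δ * (1 - κ ^ 2) else L * x i) : ℝ) ^ 2
      = (L * x i)^2 + (if i = i0 then (κ * L * x i0 + δ*(1-κ^2))^2 - (L * x i0)^2 else 0) := by
    intro i
    by_cases h : i = i0
    · subst h; simp [hi0]
    · have hne : (i : ℕ) ≠ n - 1 := by
        intro hc; exact h (Fin.ext (by simp [hi0, hc]))
      simp [hne, h]
  rw [Finset.sum_congr rfl (fun i _ => key i), Finset.sum_add_distrib,
    Finset.sum_ite_eq' Finset.univ i0, if_pos (Finset.mem_univ i0)]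
  have hsum : ∑ i, (L * x i)^2 = L^2 * ∑ i, x i ^ 2 := by
    rw [Finset.mul_sum]; exact Finset.sum_congr rfl fun i _ => by ring
  rw [hsum]
  have hκ2 : (0:ℝ) ≤ 1 - κ ^ 2 := by nlinarith
  nlinarith [sq_nonneg (L * x i0 - κ * δ), mul_nonneg hκ2 (sq_nonneg (L * x i0 - κ * δ)),
    mul_nonneg (mul_nonneg hL0 hL0) (sub_nonneg.2 hx), hx0, hx, hL2,
    mul_nonneg (sq_nonneg L) (sub_nonneg.2 hx0)]
end
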